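/- arXiv:0909.1980 — 4 statements merged into one kernel-verified Lean document; each statement's English description precedes it below -/
import Mathlib

section
/- Let p satisfy (P), fix ā > 0 and ū ∈ A₀. Let Σ be C¹ on a neighborhood of (ā,ā,ū) in ℝ×ℝ×((0,∞)×ℝ) with values in ℝ² and satisfying Σ(a,a;u) = 0 for all (a,u) in the domain, and define Ψ(a⁻,u⁻;a⁺,u⁺) = (a⁺q⁺ − a⁻q⁻, a⁺P(u⁺) − a⁻P(u⁻)) − Σ(a⁻,a⁺;u⁻). Then the determinant of the 2×2 matrix whose first column is D_{u⁻}Ψ(ā,ū;ā,ū)·r₁(ū) and whose second column is D_{u⁺}Ψ(ā,ū;ā,ū)·r₂(ū) equals ā² λ₁(ū) λ₂(ū) (λ₂(ū) − λ₁(ū)), which is nonzero. -/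
/- STATEMENT 2: Let p satisfy (P), fix ā > 0 and ū ∈ A₀. Let Σ be C¹ near (ā,ā,ū)
with Σ(a,a;u) = 0 on the domain, and Ψ(a⁻,u⁻;a⁺,u⁺) =
(a⁺q⁺ − a⁻q⁻, a⁺P(u⁺) − a⁻P(u⁻)) − Σ(a⁻,a⁺;u⁻). Then the determinant of the 2×2
matrix with columns D_{u⁻}Ψ(ā,ū;ā,ū)·r₁(ū) and D_{u⁺}Ψ(ā,ū;ā,ū)·r₂(ū) equals
ā² λ₁(ū) λ₂(ū) (λ₂(ū) − λ₁(ū)) ≠ 0, where r₁(u) = (−1,−λ₁(u)), r₂(u) = (1,λ₂(u)). -/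

noncomputable section

def soundSpeed (p : ℝ → ℝ) (ρ : ℝ) : ℝ := Real.sqrt (deriv p ρ)

def lam1 (p : ℝ → ℝ) (u : ℝ × ℝ) : ℝ := u.2 / u.1 - soundSpeed p u.1
def lam2 (p : ℝ → ℝ) (u : ℝ × ℝ) : ℝ := u.2 / u.1 + soundSpeed p u.1

def Pflux (p : ℝ → ℝ) (u : ℝ × ℝ) : ℝ := u.2 ^ 2 / u.1 + p u.1

def subsonicA0 (p : ℝ → ℝ) : Set (ℝ × ℝ) :=
  {u | 0 < u.1 ∧ lam1 p u < 0 ∧ 0 < lam2 p u}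

/-- the junction coupling map Ψ -/
def Psi (p : ℝ → ℝ) (Sgm : ℝ → ℝ → (ℝ × ℝ) → ℝ × ℝ)
    (aL : ℝ) (uL : ℝ × ℝ) (aR : ℝ) (uR : ℝ × ℝ) : ℝ × ℝ :=
  (aR * uR.2 - aL * uL.2, aR * Pflux p uR - aL * Pflux p uL) - Sgm aL aR uL

/-- right eigenvectors -/
def r1 (p : ℝ → ℝ) (u : ℝ × ℝ) : ℝ × ℝ := (-1, -lam1 p u)
def r2 (p : ℝ → ℝ) (u : ℝ × ℝ) : ℝ × ℝ := (1, lam2 p u)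

/-!
Because `Σ(ā, ā; ·)` vanishes near `ū`, both partial derivatives of `Ψ` at the junction are
`∓ ā` times the Jacobian of the flux `u ↦ (q, P(u))`. The vectors `r₁(ū)`, `r₂(ū)` are
eigenvectors of that Jacobian with eigenvalues `λ₁(ū)`, `λ₂(ū)`, so the determinant is an
explicit 2×2 computation, nonzero because `λ₁(ū) < 0 < λ₂(ū)` in the subsonic region.
-/

open ContinuousLinearMap Filter Topology

def fluxJacobian (p : ℝ → ℝ) (u : ℝ × ℝ) : ℝ × ℝ →L[ℝ] ℝ × ℝ :=
  (snd ℝ ℝ ℝ).prod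
    ((deriv p u.1 - (u.2 / u.1) ^ 2) • fst ℝ ℝ ℝ + (2 * (u.2 / u.1)) • snd ℝ ℝ ℝ)

section Flux

variable {p : ℝ → ℝ} {u : ℝ × ℝ}

theorem hasFDerivAt_flux (hp : DifferentiableAt ℝ p u.1) (hρ : u.1 ≠ 0) :
    HasFDerivAt (fun v : ℝ × ℝ => (v.2, Pflux p v)) (fluxJacobian p u) u := by
  have hfst := hasFDerivAt_fst (𝕜 := ℝ) (p := u) (E := ℝ) (F := ℝ)
  have hsnd := hasFDerivAt_snd (𝕜 := ℝ) (p := u) (E := ℝ) (F := ℝ)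
  have hP := ((hsnd.mul hsnd).mul ((hasDerivAt_inv hρ).comp_hasFDerivAt u hfst)).add
    (hp.hasDerivAt.comp_hasFDerivAt u hfst)
  refine (hsnd.prodMk hP).congr_fderiv ?_ |>.congr_of_eventuallyEq ?_
  · ext <;> simp [fluxJacobian] <;> field_simp <;> ring
  · filter_upwards with v
    simp [Pflux, div_eq_mul_inv, sq]

/-- `hl` says that `l` is one of the roots `q/ρ ± √p'(ρ)` of the characteristic polynomial. -/
theorem fluxJacobian_apply_one_eigen {l : ℝ} (hl : (l - u.2 / u.1) ^ 2 = deriv p u.1) :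
    fluxJacobian p u (1, l) = l • ((1 : ℝ), l) := by
  simp only [fluxJacobian, prod_apply, coe_snd', add_apply, smul_apply, coe_fst',
    smul_eq_mul, Prod.smul_mk, mul_one, Prod.mk.injEq, true_and]
  rw [← hl]
  ring

theorem fluxJacobian_r1 (h : 0 ≤ deriv p u.1) :
    fluxJacobian p u (r1 p u) = lam1 p u • r1 p u := by
  have hr1 : r1 p u = -((1 : ℝ), lam1 p u) := rfl
  rw [hr1, map_neg, smul_neg, fluxJacobian_apply_one_eigen]
  simp [lam1, soundSpeed, Real.sq_sqrt h]

theorem fluxJacobian_r2 (h : 0 ≤ deriv p u.1) :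
    fluxJacobian p u (r2 p u) = lam2 p u • r2 p u :=
  fluxJacobian_apply_one_eigen (by simp [lam2, soundSpeed, Real.sq_sqrt h])

end Flux

section Junction

variable {p : ℝ → ℝ} {Sgm : ℝ → ℝ → (ℝ × ℝ) → ℝ × ℝ} {u : ℝ × ℝ}

theorem hasFDerivAt_Psi_right (hp : DifferentiableAt ℝ p u.1) (hρ : u.1 ≠ 0)
    (aL aR : ℝ) (uL : ℝ × ℝ) :
    HasFDerivAt (fun uR => Psi p Sgm aL uL aR uR) (aR • fluxJacobian p u) u := by
  refine ((hasFDerivAt_flux hp hρ).const_smul aR).sub_const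
    ((aL * uL.2, aL * Pflux p uL) + Sgm aL aR uL) |>.congr_of_eventuallyEq ?_
  filter_upwards with v
  simp only [Psi, Pi.smul_apply, Prod.smul_mk, smul_eq_mul, Prod.mk_sub_mk, sub_add_eq_sub_sub]

theorem hasFDerivAt_Psi_left (hp : DifferentiableAt ℝ p u.1) (hρ : u.1 ≠ 0) {a : ℝ}
    (hSgm : ∀ᶠ v in 𝓝 u, Sgm a a v = 0) (uR : ℝ × ℝ) :
    HasFDerivAt (fun uL => Psi p Sgm a uL a uR) (-(a • fluxJacobian p u)) u := by
  refine ((hasFDerivAt_flux hp hρ).const_smul a).const_sub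
    (a * uR.2, a * Pflux p uR) |>.congr_of_eventuallyEq ?_
  filter_upwards [hSgm] with v hv
  simp only [Psi, hv, sub_zero, Pi.smul_apply, Prod.smul_mk, smul_eq_mul, Prod.mk_sub_mk]

theorem det_Psi_eigen_columns (h : 0 ≤ deriv p u.1) (a : ℝ) :
    ((-(a • fluxJacobian p u)) (r1 p u)).1 * ((a • fluxJacobian p u) (r2 p u)).2
        - ((a • fluxJacobian p u) (r2 p u)).1 * ((-(a • fluxJacobian p u)) (r1 p u)).2
      = a ^ 2 * lam1 p u * lam2 p u * (lam2 p u - lam1 p u) := by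
  rw [neg_apply, smul_apply, smul_apply, fluxJacobian_r1 h, fluxJacobian_r2 h]
  simp only [r1, r2, Prod.smul_mk, Prod.neg_mk, smul_eq_mul]
  ring

end Junction

theorem junction_transversality_det_general
    (p : ℝ → ℝ)
    (hp' : ∀ ρ > (0:ℝ), deriv p ρ > 0)
    (abar : ℝ) (habar : 0 < abar)
    (ubar : ℝ × ℝ) (hubar : ubar ∈ subsonicA0 p)
    (Sgm : ℝ → ℝ → (ℝ × ℝ) → ℝ × ℝ)
    (hSgm1 : ∀ᶠ x : ℝ × (ℝ × ℝ) in nhds (abar, ubar), Sgm x.1 x.1 x.2 = 0) :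
    (∃ Lm : ℝ × ℝ →L[ℝ] ℝ × ℝ,
        HasFDerivAt (fun uL : ℝ × ℝ => Psi p Sgm abar uL abar ubar) Lm ubar) ∧
    (∃ Lp : ℝ × ℝ →L[ℝ] ℝ × ℝ,
        HasFDerivAt (fun uR : ℝ × ℝ => Psi p Sgm abar ubar abar uR) Lp ubar) ∧
    ∀ Lm Lp : ℝ × ℝ →L[ℝ] ℝ × ℝ,
      HasFDerivAt (fun uL : ℝ × ℝ => Psi p Sgm abar uL abar ubar) Lm ubar →
      HasFDerivAt (fun uR : ℝ × ℝ => Psi p Sgm abar ubar abar uR) Lp ubar →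
        (Lm (r1 p ubar)).1 * (Lp (r2 p ubar)).2
            - (Lp (r2 p ubar)).1 * (Lm (r1 p ubar)).2
          = abar ^ 2 * lam1 p ubar * lam2 p ubar * (lam2 p ubar - lam1 p ubar) ∧
        (Lm (r1 p ubar)).1 * (Lp (r2 p ubar)).2
            - (Lp (r2 p ubar)).1 * (Lm (r1 p ubar)).2 ≠ 0 := by
  obtain ⟨hρ, hl1, hl2⟩ := hubar
  have hpos := hp' _ hρ
  have hp : DifferentiableAt ℝ p ubar.1 := differentiableAt_of_deriv_ne_zero hpos.ne'
  have hSgm : ∀ᶠ v in 𝓝 ubar, Sgm abar abar v = 0 :=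
    (continuousAt_const.prodMk continuousAt_id).tendsto.eventually hSgm1
  have hL := hasFDerivAt_Psi_left hp hρ.ne' hSgm ubar
  have hR := hasFDerivAt_Psi_right (Sgm := Sgm) hp hρ.ne' abar abar ubar
  refine ⟨⟨_, hL⟩, ⟨_, hR⟩, fun Lm Lp hLm hLp => ?_⟩
  rw [hLm.unique hL, hLp.unique hR, det_Psi_eigen_columns hpos.le]
  refine ⟨rfl, (mul_neg_of_neg_of_pos ?_ (sub_pos.2 (hl1.trans hl2))).ne⟩
  exact mul_neg_of_neg_of_pos (mul_neg_of_pos_of_neg (pow_pos habar 2) hl1) hl2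

theorem junction_transversality_det
    (p : ℝ → ℝ)
    (hp_reg : ContDiffOn ℝ 2 p (Set.Ioi 0))
    (hp_pos : ∀ ρ > (0:ℝ), p ρ > 0)
    (hp' : ∀ ρ > (0:ℝ), deriv p ρ > 0)
    (hp'' : ∀ ρ > (0:ℝ), deriv (deriv p) ρ ≥ 0)
    (abar : ℝ) (habar : 0 < abar)
    (ubar : ℝ × ℝ) (hubar : ubar ∈ subsonicA0 p)
    (Sgm : ℝ → ℝ → (ℝ × ℝ) → ℝ × ℝ)
    (hSgm0 : ContDiffAt ℝ 1 (fun x : ℝ × ℝ × (ℝ × ℝ) => Sgm x.1 x.2.1 x.2.2)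
      (abar, abar, ubar))
    (hSgm1 : ∀ᶠ x : ℝ × (ℝ × ℝ) in nhds (abar, ubar), Sgm x.1 x.1 x.2 = 0) :
    (∃ Lm : ℝ × ℝ →L[ℝ] ℝ × ℝ,
        HasFDerivAt (fun uL : ℝ × ℝ => Psi p Sgm abar uL abar ubar) Lm ubar) ∧
    (∃ Lp : ℝ × ℝ →L[ℝ] ℝ × ℝ,
        HasFDerivAt (fun uR : ℝ × ℝ => Psi p Sgm abar ubar abar uR) Lp ubar) ∧
    ∀ Lm Lp : ℝ × ℝ →L[ℝ] ℝ × ℝ,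
      HasFDerivAt (fun uL : ℝ × ℝ => Psi p Sgm abar uL abar ubar) Lm ubar →
      HasFDerivAt (fun uR : ℝ × ℝ => Psi p Sgm abar ubar abar uR) Lp ubar →
        (Lm (r1 p ubar)).1 * (Lp (r2 p ubar)).2
            - (Lp (r2 p ubar)).1 * (Lm (r1 p ubar)).2
          = abar ^ 2 * lam1 p ubar * lam2 p ubar * (lam2 p ubar - lam1 p ubar) ∧
        (Lm (r1 p ubar)).1 * (Lp (r2 p ubar)).2
            - (Lp (r2 p ubar)).1 * (Lm (r1 p ubar)).2 ≠ 0 :=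
  junction_transversality_det_general p hp' abar habar ubar hubar Sgm hSgm1

end
end

section
/- (Lemma 2.1) Let p satisfy (P), fix ā > 0, Δ ∈ (0,ā), δ > 0 and ū ∈ A₀. Let Σ ∈ C¹([ā−Δ,ā+Δ]² × B(ū;δ); ℝ²) satisfy Σ(a,a;u) = 0 for all a ∈ [ā−Δ,ā+Δ] and u ∈ B(ū;δ). Then there exist δ̄ > 0 and a Lipschitz continuous map T : (ā−δ̄,ā+δ̄) × (ā−δ̄,ā+δ̄) × B(ū;δ̄) → A₀ such that for all a⁻, a⁺ ∈ (ā−δ̄,ā+δ̄) and u⁻, u⁺ ∈ B(ū;δ̄): Ψ(a⁻,u⁻;a⁺,u⁺) = 0 if and only if u⁺ = T(a⁻,a⁺;u⁻). In particular T(ā,ā;ū) = ū. -/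
/- STATEMENT 3 (Lemma 2.1): Let p satisfy (P), fix ā > 0, Δ ∈ (0,ā), δ > 0 and
ū ∈ A₀. Let Σ ∈ C¹([ā−Δ,ā+Δ]² × B(ū;δ); ℝ²) with Σ(a,a;u) = 0 there. Then there
exist δ̄ > 0 and a Lipschitz map T : (ā−δ̄,ā+δ̄)² × B(ū;δ̄) → A₀ such that for all
a⁻,a⁺ ∈ (ā−δ̄,ā+δ̄) and u⁻,u⁺ ∈ B(ū;δ̄): Ψ(a⁻,u⁻;a⁺,u⁺) = 0 ↔ u⁺ = T(a⁻,a⁺;u⁻).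
In particular T(ā,ā;ū) = ū. -/

noncomputable section

open Set Metric

/- With `F(ρ, q) = (q, P(ρ, q))` the flux, `Ψ = a⁺ F(u⁺) - a⁻ F(u⁻) - Σ(a⁻, a⁺; u⁻)`. Its partial
derivative in `u⁺` at `(ā, ā, ū, ū)` is `ā DF(ū)`, and `det DF(ū) = λ₁ λ₂ < 0` on the subsonic
region, so the implicit function theorem produces `T`. Being strictly differentiable at the base
point, `T` is Lipschitz near it, and it takes values in `A₀` because `A₀` is open. -/

open Filter Topology

theorem HasStrictFDerivAt.exists_lipschitzOnWith_implicitFunction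
    {𝕜 : Type*} [NontriviallyNormedField 𝕜]
    {E₁ : Type*} [NormedAddCommGroup E₁] [NormedSpace 𝕜 E₁] [CompleteSpace E₁]
    {E₂ : Type*} [NormedAddCommGroup E₂] [NormedSpace 𝕜 E₂] [CompleteSpace E₂]
    {F : Type*} [NormedAddCommGroup F] [NormedSpace 𝕜 F] [CompleteSpace F]
    {f : E₁ × E₂ → F} {f' : E₁ × E₂ →L[𝕜] F} {u : E₁ × E₂}
    (hf : HasStrictFDerivAt f f' u) (hf₂ : (f' ∘L .inr 𝕜 E₁ E₂).IsInvertible)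
    {S : Set E₂} (hS : S ∈ 𝓝 u.2) :
    ∃ r > 0, ∃ ψ : E₁ → E₂, (∃ K, LipschitzOnWith K ψ (ball u.1 r)) ∧
      MapsTo ψ (ball u.1 r) S ∧
      (∀ x ∈ ball u.1 r, ∀ y ∈ ball u.2 r, f (x, y) = f u ↔ y = ψ x) ∧ ψ u.1 = u.2 := by
  set ψ := hf.implicitFunctionOfProdDomain hf₂
  obtain ⟨K, t, ht, hK⟩ :=
    (hf.hasStrictFDerivAt_implicitFunctionOfProdDomain hf₂).exists_lipschitzOnWith
  have hS' : ψ ⁻¹' S ∈ 𝓝 u.1 := hf.tendsto_implicitFunctionOfProdDomain hf₂ hS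
  obtain ⟨r₁, hr₁, hball₁⟩ := Metric.mem_nhds_iff.mp (inter_mem ht hS')
  obtain ⟨r₂, hr₂, hball₂⟩ := Metric.eventually_nhds_iff_ball.mp
    (hf.eventually_apply_eq_iff_implicitFunctionOfProdDomain hf₂)
  have h₁ : ball u.1 (min r₁ r₂) ⊆ t ∩ ψ ⁻¹' S :=
    (ball_subset_ball (min_le_left _ _)).trans hball₁
  refine ⟨min r₁ r₂, lt_min hr₁ hr₂, ψ, ⟨K, hK.mono fun x hx => (h₁ hx).1⟩,
    fun x hx => (h₁ hx).2, fun x hx y hy => ?_, ?_⟩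
  · rw [eq_comm (a := y)]
    apply hball₂
    rw [← ball_prod_same]
    exact ⟨ball_subset_ball (min_le_right _ _) hx, ball_subset_ball (min_le_right _ _) hy⟩
  · exact ((hf.eventually_apply_eq_iff_implicitFunctionOfProdDomain hf₂).self_of_nhds).mp rfl

theorem ContinuousLinearMap.isInvertible_of_injective {𝕜 E : Type*} [NontriviallyNormedField 𝕜]
    [CompleteSpace 𝕜] [NormedAddCommGroup E] [NormedSpace 𝕜 E] [FiniteDimensional 𝕜 E]
    {f : E →L[𝕜] E} (hf : Function.Injective f) : f.IsInvertible :=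
  ⟨(LinearEquiv.ofInjectiveEndo (f : E →ₗ[𝕜] E) hf).toContinuousLinearEquiv, rfl⟩

def flux (p : ℝ → ℝ) (u : ℝ × ℝ) : ℝ × ℝ := (u.2, Pflux p u)

def fluxDeriv (p : ℝ → ℝ) (u : ℝ × ℝ) : (ℝ × ℝ) →L[ℝ] ℝ × ℝ :=
  (ContinuousLinearMap.snd ℝ ℝ ℝ).prod
    ((deriv p u.1 - (u.2 / u.1) ^ 2) • ContinuousLinearMap.fst ℝ ℝ ℝ +
      (2 * (u.2 / u.1)) • ContinuousLinearMap.snd ℝ ℝ ℝ)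

lemma Psi_eq (p : ℝ → ℝ) (Sgm : ℝ → ℝ → (ℝ × ℝ) → ℝ × ℝ) (aL aR : ℝ) (uL uR : ℝ × ℝ) :
    Psi p Sgm aL uL aR uR = aR • flux p uR - aL • flux p uL - Sgm aL aR uL :=
  rfl

lemma hasStrictFDerivAt_flux {p : ℝ → ℝ} {u : ℝ × ℝ}
    (hp : HasStrictDerivAt p (deriv p u.1) u.1) (hu : u.1 ≠ 0) :
    HasStrictFDerivAt (flux p) (fluxDeriv p u) u := by
  have hfst := hasStrictFDerivAt_fst (𝕜 := ℝ) (p := u)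
  have hsnd := hasStrictFDerivAt_snd (𝕜 := ℝ) (p := u)
  have hinv : HasStrictFDerivAt (fun v : ℝ × ℝ => v.1⁻¹) _ u :=
    (hasStrictDerivAt_inv hu).comp_hasStrictFDerivAt u hfst
  have hP : HasStrictFDerivAt (fun v : ℝ × ℝ => v.2 ^ 2 * v.1⁻¹ + p v.1) _ u :=
    ((hsnd.pow 2).mul hinv).add (hp.comp_hasStrictFDerivAt u hfst)
  have hflux : flux p = fun v => (v.2, v.2 ^ 2 * v.1⁻¹ + p v.1) := by
    ext v <;> simp [flux, Pflux, div_eq_mul_inv]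
  rw [hflux]
  refine hsnd.prodMk (hP.congr_fderiv ?_)
  ext
  · simp
    ring
  · simp
    field_simp

lemma isOpen_subsonicA0 {p : ℝ → ℝ} (hp : ContinuousOn (deriv p) (Ioi 0)) :
    IsOpen (subsonicA0 p) := by
  have hlam : ContinuousOn (fun u : ℝ × ℝ => (lam1 p u, lam2 p u)) {u | 0 < u.1} := by
    have hc : ContinuousOn (fun u : ℝ × ℝ => soundSpeed p u.1) {u | 0 < u.1} :=
      Real.continuous_sqrt.comp_continuousOn (hp.comp continuous_fst.continuousOn fun _ h => h)
    have hv : ContinuousOn (fun u : ℝ × ℝ => u.2 / u.1) {u | 0 < u.1} :=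
      continuous_snd.continuousOn.div continuous_fst.continuousOn fun _ h => ne_of_gt h
    exact (hv.sub hc).prodMk (hv.add hc)
  exact hlam.isOpen_inter_preimage (isOpen_lt continuous_const continuous_fst)
    (isOpen_Iio.prod isOpen_Ioi)

lemma sq_lt_deriv_of_mem_subsonicA0 {p : ℝ → ℝ} {u : ℝ × ℝ} (hu : u ∈ subsonicA0 p) :
    (u.2 / u.1) ^ 2 < deriv p u.1 := by
  obtain ⟨-, h1, h2⟩ := hu
  simp only [lam1, lam2, soundSpeed] at h1 h2
  have hc : 0 < Real.sqrt (deriv p u.1) := by linarith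
  calc (u.2 / u.1) ^ 2 < Real.sqrt (deriv p u.1) ^ 2 := sq_lt_sq' (by linarith) (by linarith)
    _ = deriv p u.1 := Real.sq_sqrt (Real.sqrt_pos.mp hc).le

lemma fluxDeriv_injective {p : ℝ → ℝ} {u : ℝ × ℝ} (hu : (u.2 / u.1) ^ 2 < deriv p u.1) :
    Function.Injective (fluxDeriv p u) := by
  rw [injective_iff_map_eq_zero]
  rintro ⟨x, y⟩ h
  simp only [fluxDeriv, ContinuousLinearMap.prod_apply, ContinuousLinearMap.coe_snd', add_apply,
    smul_apply, ContinuousLinearMap.coe_fst', smul_eq_mul, Prod.mk_eq_zero] at h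
  obtain ⟨rfl, h⟩ := h
  have : x = 0 := by simpa [(sub_pos.mpr hu).ne'] using h
  simp [this]

lemma exists_hasStrictFDerivAt_Psi {p : ℝ → ℝ} {Sgm : ℝ → ℝ → (ℝ × ℝ) → ℝ × ℝ}
    {w : ℝ × ℝ × (ℝ × ℝ)} {v : ℝ × ℝ} {ΦL' ΦR' : (ℝ × ℝ) →L[ℝ] ℝ × ℝ}
    {Sgm' : (ℝ × ℝ × (ℝ × ℝ)) →L[ℝ] ℝ × ℝ}
    (hΦL : HasStrictFDerivAt (flux p) ΦL' w.2.2) (hΦR : HasStrictFDerivAt (flux p) ΦR' v)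
    (hSgm : HasStrictFDerivAt (fun w : ℝ × ℝ × (ℝ × ℝ) => Sgm w.1 w.2.1 w.2.2) Sgm' w) :
    ∃ D : ((ℝ × ℝ × (ℝ × ℝ)) × (ℝ × ℝ)) →L[ℝ] ℝ × ℝ,
      HasStrictFDerivAt (fun z : (ℝ × ℝ × (ℝ × ℝ)) × (ℝ × ℝ) =>
        Psi p Sgm z.1.1 z.1.2.2 z.1.2.1 z.2) D (w, v) ∧
      D ∘L .inr ℝ _ _ = w.2.1 • ΦR' := by
  simp_rw [Psi_eq]
  have hw := hasStrictFDerivAt_fst (𝕜 := ℝ) (p := (w, v))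
  have hR := (hasStrictFDerivAt_fst.comp (w, v) (hasStrictFDerivAt_snd.comp (w, v) hw)).smul
    (hΦR.comp (w, v) (hasStrictFDerivAt_snd (p := (w, v))))
  have hL := (hasStrictFDerivAt_fst.comp (w, v) hw).smul
    (hΦL.comp (w, v) (hasStrictFDerivAt_snd.comp (w, v) (hasStrictFDerivAt_snd.comp (w, v) hw)))
  have hD := (hR.sub hL).sub (hSgm.comp (w, v) hw)
  -- `D ∘L inr` is the derivative of the slice `v ↦ Ψ(w, v)`, which is computed directly.
  refine ⟨_, hD, HasFDerivAt.unique (hD.hasFDerivAt.comp v (hasFDerivAt_prodMk_right w v)) ?_⟩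
  exact ((hΦR.hasFDerivAt.const_smul w.2.1).sub_const (w.1 • flux p w.2.2)).sub_const
    (Sgm w.1 w.2.1 w.2.2)

theorem stationary_solution_map_T_general
    (p : ℝ → ℝ)
    (hp_reg : ContDiffOn ℝ 2 p (Set.Ioi 0))
    (abar Δ δ : ℝ) (habar : 0 < abar) (hΔ : 0 < Δ) (hδ : 0 < δ)
    (ubar : ℝ × ℝ) (hubar : ubar ∈ subsonicA0 p)
    (Sgm : ℝ → ℝ → (ℝ × ℝ) → ℝ × ℝ)
    (hSgm0 : ContDiffOn ℝ 1 (fun x : ℝ × ℝ × (ℝ × ℝ) => Sgm x.1 x.2.1 x.2.2)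
      (Icc (abar - Δ) (abar + Δ) ×ˢ Icc (abar - Δ) (abar + Δ) ×ˢ ball ubar δ))
    (hSgm1 : ∀ a ∈ Icc (abar - Δ) (abar + Δ), ∀ u ∈ ball ubar δ, Sgm a a u = 0) :
    ∃ δbar > 0, ∃ T : ℝ → ℝ → (ℝ × ℝ) → ℝ × ℝ,
      (∃ K : NNReal, LipschitzOnWith K
          (fun x : ℝ × ℝ × (ℝ × ℝ) => T x.1 x.2.1 x.2.2)
          (Ioo (abar - δbar) (abar + δbar) ×ˢ Ioo (abar - δbar) (abar + δbar) ×ˢ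
            ball ubar δbar)) ∧
      (∀ aL ∈ Ioo (abar - δbar) (abar + δbar), ∀ aR ∈ Ioo (abar - δbar) (abar + δbar),
        ∀ uL ∈ ball ubar δbar, T aL aR uL ∈ subsonicA0 p) ∧
      (∀ aL ∈ Ioo (abar - δbar) (abar + δbar), ∀ aR ∈ Ioo (abar - δbar) (abar + δbar),
        ∀ uL ∈ ball ubar δbar, ∀ uR ∈ ball ubar δbar,
          (Psi p Sgm aL uL aR uR = 0 ↔ uR = T aL aR uL)) ∧
      T abar abar ubar = ubar := by
  have hp : HasStrictDerivAt p (deriv p ubar.1) ubar.1 :=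
    (hp_reg.contDiffAt (Ioi_mem_nhds hubar.1)).hasStrictDerivAt (by norm_num)
  have hΦ := hasStrictFDerivAt_flux hp hubar.1.ne'
  have hIcc : Icc (abar - Δ) (abar + Δ) ∈ 𝓝 abar := Icc_mem_nhds (by linarith) (by linarith)
  have hSgm := (hSgm0.contDiffAt (x := (abar, abar, ubar)) (prod_mem_nhds hIcc
    (prod_mem_nhds hIcc (ball_mem_nhds _ hδ)))).hasStrictFDerivAt one_ne_zero
  obtain ⟨D, hD, hDinr⟩ := exists_hasStrictFDerivAt_Psi (w := (abar, abar, ubar)) hΦ hΦ hSgm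
  have hinv : (D ∘L .inr ℝ _ _).IsInvertible := hDinr ▸
    ContinuousLinearMap.isInvertible_of_injective ((smul_right_injective _ habar.ne').comp
      (fluxDeriv_injective (sq_lt_deriv_of_mem_subsonicA0 hubar)))
  have hA0 := (isOpen_subsonicA0 (hp_reg.continuousOn_deriv_of_isOpen isOpen_Ioi
    (by norm_num))).mem_nhds hubar
  obtain ⟨r, hr, T, ⟨K, hK⟩, hTA0, hTiff, hTbase⟩ :=
    hD.exists_lipschitzOnWith_implicitFunction hinv hA0
  have hbase : Psi p Sgm abar ubar abar ubar = 0 := by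
    simp [Psi, hSgm1 abar (mem_of_mem_nhds hIcc) ubar (mem_ball_self hδ)]
  have hball : Ioo (abar - r) (abar + r) ×ˢ Ioo (abar - r) (abar + r) ×ˢ ball ubar r =
      ball (abar, abar, ubar) r := by
    rw [← Real.ball_eq_Ioo, ball_prod_same, ball_prod_same]
  have hmem : ∀ {aL aR uL}, aL ∈ Ioo (abar - r) (abar + r) → aR ∈ Ioo (abar - r) (abar + r) →
      uL ∈ ball ubar r → (aL, aR, uL) ∈ ball (abar, abar, ubar) r :=
    fun hL hR huL => hball ▸ ⟨hL, hR, huL⟩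
  refine ⟨r, hr, fun aL aR uL => T (aL, aR, uL), ⟨K, hball ▸ hK⟩,
    fun aL hL aR hR uL huL => hTA0 (hmem hL hR huL),
    fun aL hL aR hR uL huL uR huR => hbase ▸ hTiff _ (hmem hL hR huL) uR huR, hTbase⟩

theorem stationary_solution_map_T
    (p : ℝ → ℝ)
    (hp_reg : ContDiffOn ℝ 2 p (Set.Ioi 0))
    (hp_pos : ∀ ρ > (0:ℝ), p ρ > 0)
    (hp' : ∀ ρ > (0:ℝ), deriv p ρ > 0)
    (hp'' : ∀ ρ > (0:ℝ), deriv (deriv p) ρ ≥ 0)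
    (abar Δ δ : ℝ) (habar : 0 < abar) (hΔ : 0 < Δ) (hΔa : Δ < abar) (hδ : 0 < δ)
    (ubar : ℝ × ℝ) (hubar : ubar ∈ subsonicA0 p)
    (Sgm : ℝ → ℝ → (ℝ × ℝ) → ℝ × ℝ)
    (hSgm0 : ContDiffOn ℝ 1 (fun x : ℝ × ℝ × (ℝ × ℝ) => Sgm x.1 x.2.1 x.2.2)
      (Icc (abar - Δ) (abar + Δ) ×ˢ Icc (abar - Δ) (abar + Δ) ×ˢ ball ubar δ))
    (hSgm1 : ∀ a ∈ Icc (abar - Δ) (abar + Δ), ∀ u ∈ ball ubar δ, Sgm a a u = 0) :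
    ∃ δbar > 0, ∃ T : ℝ → ℝ → (ℝ × ℝ) → ℝ × ℝ,
      (∃ K : NNReal, LipschitzOnWith K
          (fun x : ℝ × ℝ × (ℝ × ℝ) => T x.1 x.2.1 x.2.2)
          (Ioo (abar - δbar) (abar + δbar) ×ˢ Ioo (abar - δbar) (abar + δbar) ×ˢ
            ball ubar δbar)) ∧
      (∀ aL ∈ Ioo (abar - δbar) (abar + δbar), ∀ aR ∈ Ioo (abar - δbar) (abar + δbar),
        ∀ uL ∈ ball ubar δbar, T aL aR uL ∈ subsonicA0 p) ∧
      (∀ aL ∈ Ioo (abar - δbar) (abar + δbar), ∀ aR ∈ Ioo (abar - δbar) (abar + δbar),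
        ∀ uL ∈ ball ubar δbar, ∀ uR ∈ ball ubar δbar,
          (Psi p Sgm aL uL aR uR = 0 ↔ uR = T aL aR uL)) ∧
      T abar abar ubar = ubar :=
  stationary_solution_map_T_general p hp_reg abar Δ δ habar hΔ hδ ubar hubar Sgm hSgm0 hSgm1

end
end

section
/- Fix ξ ∈ (0,1) and set η = 1/(1−ξ²). Define, for θ in a neighborhood of 0, f(θ) = 1 + θ(η/2 − 1) + (θ/(1+θ)) · (1 − (1/2)/(1 − ξ²(1−θ)²/(1+ηθ)²)). Then f(0) = 1 and (f(θ) − 1)/θ² → 𝒦(ξ) as θ → 0, where 𝒦(ξ) = (−1 + 8ξ² − 7ξ⁴ + 2ξ⁶)/(2(1−ξ)³(1+ξ)³); equivalently, f(θ) = 1 + 𝒦(ξ)θ² + o(θ²). -/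
/-!
Clearing denominators, `f(θ) - 1 = θ² P(θ) / (2 Q(θ) (1 + θ))` with polynomials `P`
(`remainderNum`) and `Q(θ) = (1 + ηθ)² - ξ²(1 - θ)²` (`sonicGap`). The first-order term cancels
because `η (1 - ξ²) = 1`, so `(f(θ) - 1)/θ²` is a rational function continuous at `0`, and its
value there is `P(0) / (2 (1 - ξ²)) = η³ - η/2 - 1 = 𝒦(ξ)`.
-/

open Filter Topology

theorem tendsto_div_pow_of_eventuallyEq_pow_mul {𝕜 : Type*} [NormedField 𝕜] {f g : 𝕜 → 𝕜}
    (n : ℕ) (hg : ContinuousAt g 0) (hfg : f =ᶠ[𝓝[≠] 0] fun x => x ^ n * g x) :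
    Tendsto (fun x => f x / x ^ n) (𝓝[≠] 0) (𝓝 (g 0)) := by
  refine (hg.tendsto.mono_left nhdsWithin_le_nhds).congr' ?_
  filter_upwards [hfg, self_mem_nhdsWithin] with x hx hx0
  rw [hx, mul_div_cancel_left₀ _ (pow_ne_zero n hx0)]

noncomputable section

namespace TwoJunction

variable (ξ : ℝ)

def eta : ℝ := 1 / (1 - ξ ^ 2)

def amplification (θ : ℝ) : ℝ :=
  1 + θ * (eta ξ / 2 - 1)
    + θ / (1 + θ) * (1 - (1 / 2) / (1 - ξ ^ 2 * (1 - θ) ^ 2 / (1 + eta ξ * θ) ^ 2))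

/-- `(1 + ηθ)² (1 - ξ⁺²)`, where `ξ⁺ = ξ (1 - θ) / (1 + ηθ)` is the Mach number between the
two junctions. -/
def sonicGap (θ : ℝ) : ℝ := (1 + eta ξ * θ) ^ 2 - ξ ^ 2 * (1 - θ) ^ 2

def remainderNum (θ : ℝ) : ℝ :=
  eta ξ * (1 + θ) * (2 * (eta ξ + ξ ^ 2) + (eta ξ ^ 2 - ξ ^ 2) * θ)
    - 2 * sonicGap ξ θ - 2 * eta ξ - eta ξ ^ 2 * θ + 1

def remainder (θ : ℝ) : ℝ := remainderNum ξ θ / (2 * sonicGap ξ θ * (1 + θ))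

variable {ξ}

theorem eta_mul_one_sub_sq (hξ : ξ ^ 2 ≠ 1) : eta ξ * (1 - ξ ^ 2) = 1 :=
  one_div_mul_cancel (sub_ne_zero.2 hξ.symm)

theorem sonicGap_zero : sonicGap ξ 0 = 1 - ξ ^ 2 := by
  simp [sonicGap]

theorem amplification_sub_one (hξ : ξ ^ 2 ≠ 1) {θ : ℝ} (hθ : 1 + θ ≠ 0)
    (hη : 1 + eta ξ * θ ≠ 0) (hQ : sonicGap ξ θ ≠ 0) :
    amplification ξ θ - 1 = θ ^ 2 * remainder ξ θ := by
  have hmach : 1 - ξ ^ 2 * (1 - θ) ^ 2 / (1 + eta ξ * θ) ^ 2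
      = sonicGap ξ θ / (1 + eta ξ * θ) ^ 2 := by
    rw [sonicGap, sub_div, div_self (pow_ne_zero 2 hη)]
  rw [amplification, hmach, remainder, remainderNum]
  field_simp
  unfold sonicGap
  linear_combination (θ + θ ^ 2) * eta_mul_one_sub_sq hξ

theorem remainder_zero (hξ : ξ ^ 2 ≠ 1) : remainder ξ 0 = eta ξ ^ 3 - eta ξ / 2 - 1 := by
  have h := eta_mul_one_sub_sq hξ
  have hη : eta ξ ≠ 0 := left_ne_zero_of_mul_eq_one h
  rw [remainder, remainderNum, sonicGap_zero]
  field_simp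
  linear_combination (-1 - 2 * eta ξ ^ 2) * h

theorem continuousAt_remainder (hξ : ξ ^ 2 ≠ 1) : ContinuousAt (remainder ξ) 0 := by
  refine ContinuousAt.div (by unfold remainderNum sonicGap; fun_prop)
    (by unfold sonicGap; fun_prop) ?_
  rw [sonicGap_zero]
  simpa using sub_ne_zero.2 hξ.symm

theorem eventually_amplification_sub_one (hξ : ξ ^ 2 ≠ 1) :
    (fun θ => amplification ξ θ - 1) =ᶠ[𝓝[≠] 0] fun θ => θ ^ 2 * remainder ξ θ := by
  have hθ : ∀ᶠ θ : ℝ in 𝓝 0, 1 + θ ≠ 0 :=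
    (continuousAt_const.add continuousAt_id).eventually_ne (by simp)
  have hη : ∀ᶠ θ : ℝ in 𝓝 0, 1 + eta ξ * θ ≠ 0 :=
    (continuousAt_const.add (continuousAt_const.mul continuousAt_id)).eventually_ne (by simp)
  have hQ : ∀ᶠ θ : ℝ in 𝓝 0, sonicGap ξ θ ≠ 0 :=
    (show ContinuousAt (sonicGap ξ) 0 by unfold sonicGap; fun_prop).eventually_ne
      (by rw [sonicGap_zero]; exact sub_ne_zero.2 hξ.symm)
  filter_upwards [nhdsWithin_le_nhds (hθ.and (hη.and hQ))] with θ ⟨h1, h2, h3⟩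
  exact amplification_sub_one hξ h1 h2 h3

theorem eta_cube_sub_half_sub_one (hξ : ξ ^ 2 ≠ 1) :
    eta ξ ^ 3 - eta ξ / 2 - 1
      = (-1 + 8 * ξ ^ 2 - 7 * ξ ^ 4 + 2 * ξ ^ 6) / (2 * (1 - ξ) ^ 3 * (1 + ξ) ^ 3) := by
  have h1 : 1 - ξ ≠ 0 := fun h => hξ (by rw [show ξ = 1 by linarith]; norm_num)
  have h2 : 1 + ξ ≠ 0 := fun h => hξ (by rw [show ξ = -1 by linarith]; norm_num)
  rw [eta, show 1 - ξ ^ 2 = (1 - ξ) * (1 + ξ) by ring]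
  field_simp
  ring

end TwoJunction

end

theorem two_junction_amplification_expansion (ξ : ℝ) (hξ : ξ ∈ Set.Ioo (0:ℝ) 1) :
    (fun θ : ℝ => 1 + θ * ((1 / (1 - ξ ^ 2)) / 2 - 1)
        + θ / (1 + θ) * (1 - (1 / 2) /
            (1 - ξ ^ 2 * (1 - θ) ^ 2 / (1 + (1 / (1 - ξ ^ 2)) * θ) ^ 2))) 0 = 1 ∧
    Tendsto
      (fun θ : ℝ =>
        ((1 + θ * ((1 / (1 - ξ ^ 2)) / 2 - 1)
          + θ / (1 + θ) * (1 - (1 / 2) /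
              (1 - ξ ^ 2 * (1 - θ) ^ 2 / (1 + (1 / (1 - ξ ^ 2)) * θ) ^ 2))) - 1)
          / θ ^ 2)
      (nhdsWithin 0 {(0:ℝ)}ᶜ)
      (nhds ((-1 + 8 * ξ ^ 2 - 7 * ξ ^ 4 + 2 * ξ ^ 6)
        / (2 * (1 - ξ) ^ 3 * (1 + ξ) ^ 3))) := by
  have hξ2 : ξ ^ 2 ≠ 1 := by nlinarith [hξ.1, hξ.2]
  refine ⟨by norm_num, ?_⟩
  rw [← TwoJunction.eta_cube_sub_half_sub_one hξ2, ← TwoJunction.remainder_zero hξ2]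
  -- the function in the statement is `TwoJunction.amplification ξ` unfolded
  exact tendsto_div_pow_of_eventuallyEq_pow_mul 2 (TwoJunction.continuousAt_remainder hξ2)
    (TwoJunction.eventually_amplification_sub_one hξ2)
end

section
/- Fix real numbers λ̄₁ < 0 < λ̄₂, set c = (λ̄₂ − λ̄₁)/2, and fix ā > 0, H̄, Ḡ ∈ ℝ and σ₂⁻ ∈ ℝ. For ε in a neighborhood of 0, consider the 2×2 linear system in (σ₁, σ₂): −(1 + H̄ε)σ₁ + σ₂ = (1 + H̄ε)σ₂⁻ and −(1 − ε)λ̄₁σ₁ + (1 + Ḡε)λ̄₂σ₂ = (1 − ε)λ̄₂σ₂⁻. For ε small the system has a unique solution (σ₁(ε), σ₂(ε)); it satisfies σ₁(0) = 0, σ₂(0) = σ₂⁻, and is differentiable at ε = 0 with σ₁'(0) = −(λ̄₂/(2c))(1 + Ḡ + H̄)σ₂⁻ and σ₂'(0) = −((λ̄₁H̄ + λ̄₂(1 + Ḡ))/(2c))σ₂⁻. -/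
/-!
By Cramer's rule the solution of the junction system is a quotient of two polynomials in ε
whose denominator, the determinant, equals λ̄₁ - λ̄₂ = -2c ≠ 0 at ε = 0; hence it is defined
near ε = 0, and its derivative there is given by the quotient rule.
-/

open Topology

theorem cramer_two_by_two {K : Type*} [Field K] {a b c d e f : K} (hdet : a * d - b * c ≠ 0)
    (x y : K) :
    (a * x + b * y = e ∧ c * x + d * y = f) ↔
      x = (e * d - b * f) / (a * d - b * c) ∧ y = (a * f - e * c) / (a * d - b * c) := by
  constructor
  · rintro ⟨h₁, h₂⟩
    rw [eq_div_iff hdet, eq_div_iff hdet]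
    exact ⟨by linear_combination d * h₁ - b * h₂, by linear_combination a * h₂ - c * h₁⟩
  · rintro ⟨rfl, rfl⟩
    constructor <;>
    · rw [mul_div_assoc', mul_div_assoc', ← add_div, div_eq_iff hdet]
      ring

theorem hasDerivAt_zero_of_eq_quadratic {𝕜 : Type*} [NontriviallyNormedField 𝕜] {f : 𝕜 → 𝕜}
    {p q r : 𝕜} (hf : ∀ t, f t = p + q * t + r * t ^ 2) : HasDerivAt f q 0 := by
  rw [funext hf]
  refine ((((hasDerivAt_id 0).const_mul q).const_add p).add
    ((hasDerivAt_pow 2 0).const_mul r)).congr_deriv ?_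
  simp

noncomputable section JunctionSystem

variable (lam1 lam2 H G s2m : ℝ)

def junctionDet (ε : ℝ) : ℝ :=
  -(1 + H * ε) * ((1 + G * ε) * lam2) - 1 * (-(1 - ε) * lam1)

def reflectedStrength (ε : ℝ) : ℝ :=
  ((1 + H * ε) * s2m * ((1 + G * ε) * lam2) - 1 * ((1 - ε) * lam2 * s2m)) /
    junctionDet lam1 lam2 H G ε

def transmittedStrength (ε : ℝ) : ℝ :=
  (-(1 + H * ε) * ((1 - ε) * lam2 * s2m) - (1 + H * ε) * s2m * (-(1 - ε) * lam1)) /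
    junctionDet lam1 lam2 H G ε

theorem junctionDet_zero : junctionDet lam1 lam2 H G 0 = lam1 - lam2 := by
  simp only [junctionDet]
  ring

theorem hasDerivAt_junctionDet :
    HasDerivAt (junctionDet lam1 lam2 H G) (-(H + G) * lam2 - lam1) 0 :=
  hasDerivAt_zero_of_eq_quadratic (p := lam1 - lam2) (r := -H * G * lam2) fun ε => by
    simp only [junctionDet]
    ring

variable {lam1 lam2}

theorem exists_forall_abs_lt_junctionDet_ne_zero (hlam : lam1 ≠ lam2) :
    ∃ ε₀ > 0, ∀ ε, |ε| < ε₀ → junctionDet lam1 lam2 H G ε ≠ 0 := by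
  have hev : ∀ᶠ ε in 𝓝 0, junctionDet lam1 lam2 H G ε ≠ 0 :=
    (hasDerivAt_junctionDet lam1 lam2 H G).continuousAt.eventually_ne
      (by rwa [junctionDet_zero, sub_ne_zero])
  simpa only [Metric.eventually_nhds_iff, Real.dist_eq, sub_zero] using hev

theorem reflectedStrength_zero : reflectedStrength lam1 lam2 H G s2m 0 = 0 := by
  rw [reflectedStrength, div_eq_zero_iff]
  left
  ring

theorem transmittedStrength_zero (hlam : lam1 ≠ lam2) :
    transmittedStrength lam1 lam2 H G s2m 0 = s2m := by
  rw [transmittedStrength, junctionDet_zero, div_eq_iff (sub_ne_zero.2 hlam)]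
  ring

theorem hasDerivAt_reflectedStrength (hlam : lam1 ≠ lam2) :
    HasDerivAt (reflectedStrength lam1 lam2 H G s2m)
      (-(lam2 * (1 + G + H) * s2m) / (lam2 - lam1)) 0 := by
  have hnum : HasDerivAt
      (fun ε => (1 + H * ε) * s2m * ((1 + G * ε) * lam2) - 1 * ((1 - ε) * lam2 * s2m))
      ((1 + G + H) * lam2 * s2m) 0 :=
    hasDerivAt_zero_of_eq_quadratic (p := 0) (r := H * G * lam2 * s2m) fun ε => by ring
  refine (hnum.div (hasDerivAt_junctionDet lam1 lam2 H G)
    (by rwa [junctionDet_zero, sub_ne_zero])).congr_deriv ?_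
  have h12 : lam1 - lam2 ≠ 0 := sub_ne_zero.2 hlam
  have h21 : lam2 - lam1 ≠ 0 := sub_ne_zero.2 hlam.symm
  rw [junctionDet_zero]
  field_simp
  ring

theorem hasDerivAt_transmittedStrength (hlam : lam1 ≠ lam2) :
    HasDerivAt (transmittedStrength lam1 lam2 H G s2m)
      (-((lam1 * H + lam2 * (1 + G)) * s2m) / (lam2 - lam1)) 0 := by
  have hnum : HasDerivAt
      (fun ε => -(1 + H * ε) * ((1 - ε) * lam2 * s2m) - (1 + H * ε) * s2m * (-(1 - ε) * lam1))
      ((H - 1) * (lam1 - lam2) * s2m) 0 :=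
    hasDerivAt_zero_of_eq_quadratic (p := (lam1 - lam2) * s2m) (r := -H * (lam1 - lam2) * s2m)
      fun ε => by ring
  refine (hnum.div (hasDerivAt_junctionDet lam1 lam2 H G)
    (by rwa [junctionDet_zero, sub_ne_zero])).congr_deriv ?_
  have h12 : lam1 - lam2 ≠ 0 := sub_ne_zero.2 hlam
  have h21 : lam2 - lam1 ≠ 0 := sub_ne_zero.2 hlam.symm
  rw [junctionDet_zero]
  field_simp
  ring

end JunctionSystem

theorem junction_riemann_linear_system_general
    (lam1 lam2 : ℝ) (h1 : lam1 < 0) (h2 : 0 < lam2)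
    (H G s2m : ℝ) :
    ∃ ε₀ > (0:ℝ), ∃ σ₁ σ₂ : ℝ → ℝ,
      -- for |ε| < ε₀, (σ₁ ε, σ₂ ε) is the unique solution of the system
      (∀ ε : ℝ, |ε| < ε₀ → ∀ y₁ y₂ : ℝ,
        (-(1 + H * ε) * y₁ + y₂ = (1 + H * ε) * s2m ∧
          -(1 - ε) * lam1 * y₁ + (1 + G * ε) * lam2 * y₂ = (1 - ε) * lam2 * s2m)
        ↔ (y₁ = σ₁ ε ∧ y₂ = σ₂ ε)) ∧
      σ₁ 0 = 0 ∧ σ₂ 0 = s2m ∧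
      HasDerivAt σ₁ (-(lam2 / (2 * ((lam2 - lam1) / 2))) * (1 + G + H) * s2m) 0 ∧
      HasDerivAt σ₂
        (-((lam1 * H + lam2 * (1 + G)) / (2 * ((lam2 - lam1) / 2))) * s2m) 0 := by
  have hlam : lam1 ≠ lam2 := (h1.trans h2).ne
  obtain ⟨ε₀, hε₀, hdet⟩ := exists_forall_abs_lt_junctionDet_ne_zero H G hlam
  refine ⟨ε₀, hε₀, reflectedStrength lam1 lam2 H G s2m, transmittedStrength lam1 lam2 H G s2m,
    fun ε hε y₁ y₂ => ?_, reflectedStrength_zero H G s2m, transmittedStrength_zero H G s2m hlam,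
    ?_, ?_⟩
  · simpa only [reflectedStrength, transmittedStrength, junctionDet, one_mul] using
      cramer_two_by_two (e := (1 + H * ε) * s2m) (f := (1 - ε) * lam2 * s2m) (hdet ε hε) y₁ y₂
  · convert hasDerivAt_reflectedStrength H G s2m hlam using 1
    ring
  · convert hasDerivAt_transmittedStrength H G s2m hlam using 1
    ring

theorem junction_riemann_linear_system
    (lam1 lam2 : ℝ) (h1 : lam1 < 0) (h2 : 0 < lam2)
    (abar : ℝ) (habar : 0 < abar)
    (H G s2m : ℝ) :
    ∃ ε₀ > (0:ℝ), ∃ σ₁ σ₂ : ℝ → ℝ,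
      -- for |ε| < ε₀, (σ₁ ε, σ₂ ε) is the unique solution of the system
      (∀ ε : ℝ, |ε| < ε₀ → ∀ y₁ y₂ : ℝ,
        (-(1 + H * ε) * y₁ + y₂ = (1 + H * ε) * s2m ∧
          -(1 - ε) * lam1 * y₁ + (1 + G * ε) * lam2 * y₂ = (1 - ε) * lam2 * s2m)
        ↔ (y₁ = σ₁ ε ∧ y₂ = σ₂ ε)) ∧
      σ₁ 0 = 0 ∧ σ₂ 0 = s2m ∧
      HasDerivAt σ₁ (-(lam2 / (2 * ((lam2 - lam1) / 2))) * (1 + G + H) * s2m) 0 ∧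
      HasDerivAt σ₂
        (-((lam1 * H + lam2 * (1 + G)) / (2 * ((lam2 - lam1) / 2))) * s2m) 0 :=
  junction_riemann_linear_system_general lam1 lam2 h1 h2 H G s2m
end
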